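/- Let X and Y be distributive lattices, with Y conditionally complete and satisfying the dual to the infinite distributive law. Let N : Y → 2^Y be a function each of whose values is a nonempty bounded set, satisfying: (i) y ∈ N(y) for each y ∈ Y; (ii) if t, u ∈ N(z) and t ≤ y ≤ u, then y ∈ N(z); (iii) sup N(y) ∈ N(y) and inf N(y) ∈ N(y) for each y ∈ Y; (iv) if t ∈ N(u) and u ∨ y ∈ N(z), then t ∨ y ∈ N(z). Then for every map f : X → Y satisfying f(x) ∨ f(y) ∈ N(f(x ∨ y)) for all x, y ∈ X, there exists a join homomorphism F : X → Y such that F(x) ∈ N(f(x)) for every x ∈ X. -/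

import Mathlib

/-!
Put `m x = inf N(f x)`. Applying (iv) twice, with (iii), gives `m a ∨ m b ∈ N(f(a ∨ b))`; hence
`m (a ∨ b) ≤ m a ∨ m b`, and `m z ≤ sup N(f x)` whenever `z ≤ x`. The map
`F x = sup {m z | z ≤ x}` is then a join homomorphism, because every `z ≤ x ∨ y` splits as
`(z ∧ x) ∨ (z ∧ y)` in the distributive lattice `X`; and `F x` lies between `inf N(f x)` and
`sup N(f x)`, so (ii) puts it in `N(f x)`.
-/

open Set

section SupBelow

variable {X Y : Type*} [ConditionallyCompleteLattice Y] {m : X → Y}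

noncomputable def supBelow [Preorder X] (m : X → Y) (x : X) : Y := sSup (m '' Iic x)

theorem le_supBelow [Preorder X] {x : X} (hbdd : BddAbove (m '' Iic x)) : m x ≤ supBelow m x :=
  le_csSup hbdd (mem_image_of_mem m self_mem_Iic)

theorem supBelow_le [Preorder X] {x : X} {b : Y} (h : ∀ z ≤ x, m z ≤ b) : supBelow m x ≤ b :=
  csSup_le (image_nonempty.2 nonempty_Iic) (forall_mem_image.2 h)

theorem supBelow_mono [Preorder X] (hbdd : ∀ x, BddAbove (m '' Iic x)) : Monotone (supBelow m) :=
  fun _ y hxy => csSup_le_csSup (hbdd y) (image_nonempty.2 nonempty_Iic)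
    (image_mono (Iic_subset_Iic.2 hxy))

theorem supBelow_sup [DistribLattice X] (hsub : ∀ a b, m (a ⊔ b) ≤ m a ⊔ m b)
    (hbdd : ∀ x, BddAbove (m '' Iic x)) (x y : X) :
    supBelow m (x ⊔ y) = supBelow m x ⊔ supBelow m y := by
  refine le_antisymm (supBelow_le fun z hz => ?_)
    (sup_le (supBelow_mono hbdd le_sup_left) (supBelow_mono hbdd le_sup_right))
  have hsplit : z ⊓ x ⊔ z ⊓ y = z := by rw [← inf_sup_left, inf_eq_left.2 hz]
  calc m z = m (z ⊓ x ⊔ z ⊓ y) := by rw [hsplit]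
    _ ≤ m (z ⊓ x) ⊔ m (z ⊓ y) := hsub _ _
    _ ≤ supBelow m x ⊔ supBelow m y :=
      sup_le_sup (le_csSup (hbdd x) (mem_image_of_mem m inf_le_right))
        (le_csSup (hbdd y) (mem_image_of_mem m inf_le_right))

end SupBelow

theorem sup_mem_of_mem_of_mem {Y : Type*} [Lattice Y] {N : Y → Set Y}
    (hN4 : ∀ t u y z : Y, t ∈ N u → u ⊔ y ∈ N z → t ⊔ y ∈ N z) {s t u v z : Y}
    (hs : s ∈ N u) (ht : t ∈ N v) (huv : u ⊔ v ∈ N z) : s ⊔ t ∈ N z := by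
  have hsv : v ⊔ s ∈ N z := sup_comm s v ▸ hN4 s u v z hs huv
  exact sup_comm t s ▸ hN4 t v s z ht hsv

theorem stability_neighborhoods_general {X Y : Type*} [DistribLattice X]
    [ConditionallyCompleteLattice Y]
    (N : Y → Set Y)
    (hNbdd : ∀ y, BddAbove (N y) ∧ BddBelow (N y))
    (hN2 : ∀ z t u y : Y, t ∈ N z → u ∈ N z → t ≤ y → y ≤ u → y ∈ N z)
    (hN3 : ∀ y, sSup (N y) ∈ N y ∧ sInf (N y) ∈ N y)
    (hN4 : ∀ t u y z : Y, t ∈ N u → u ⊔ y ∈ N z → t ⊔ y ∈ N z)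
    (f : X → Y) (hf : ∀ x y : X, f x ⊔ f y ∈ N (f (x ⊔ y))) :
    ∃ F : X → Y, (∀ x y, F (x ⊔ y) = F x ⊔ F y) ∧ ∀ x, F x ∈ N (f x) := by
  set m : X → Y := fun x => sInf (N (f x))
  have hmem (a b : X) : m a ⊔ m b ∈ N (f (a ⊔ b)) :=
    sup_mem_of_mem_of_mem hN4 (hN3 _).2 (hN3 _).2 (hf a b)
  have hsub (a b : X) : m (a ⊔ b) ≤ m a ⊔ m b := csInf_le (hNbdd _).2 (hmem a b)
  have hle (x : X) : ∀ z ≤ x, m z ≤ sSup (N (f x)) := fun z hz => by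
    have hzx := hmem z x
    rw [sup_eq_right.2 hz] at hzx
    exact le_sup_left.trans (le_csSup (hNbdd _).1 hzx)
  have hbdd (x : X) : BddAbove (m '' Iic x) := ⟨_, forall_mem_image.2 (hle x)⟩
  exact ⟨supBelow m, supBelow_sup hsub hbdd, fun x =>
    hN2 _ _ _ _ (hN3 _).2 (hN3 _).1 (le_supBelow (hbdd x)) (supBelow_le (hle x))⟩

/-- Theorem 6 (stability via lattice neighborhoods): for `f` with
`f(x) ⊔ f(y) ∈ N(f(x ⊔ y))` there is a join homomorphism `F` with `F(x) ∈ N(f(x))`. -/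
theorem stability_neighborhoods {X Y : Type*} [DistribLattice X]
    [ConditionallyCompleteLattice Y]
    (hYdistrib : ∀ a b c : Y, a ⊓ (b ⊔ c) = (a ⊓ b) ⊔ (a ⊓ c))
    (hYdualinf : ∀ (y : Y) (S : Set Y), S.Nonempty → BddBelow S →
      y ⊔ sInf S = sInf ((fun s => y ⊔ s) '' S))
    (N : Y → Set Y)
    (hNne : ∀ y, (N y).Nonempty)
    (hNbdd : ∀ y, BddAbove (N y) ∧ BddBelow (N y))
    (hN1 : ∀ y, y ∈ N y)
    (hN2 : ∀ z t u y : Y, t ∈ N z → u ∈ N z → t ≤ y → y ≤ u → y ∈ N z)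
    (hN3 : ∀ y, sSup (N y) ∈ N y ∧ sInf (N y) ∈ N y)
    (hN4 : ∀ t u y z : Y, t ∈ N u → u ⊔ y ∈ N z → t ⊔ y ∈ N z)
    (f : X → Y) (hf : ∀ x y : X, f x ⊔ f y ∈ N (f (x ⊔ y))) :
    ∃ F : X → Y, (∀ x y, F (x ⊔ y) = F x ⊔ F y) ∧ ∀ x, F x ∈ N (f x) :=
  stability_neighborhoods_general N hNbdd hN2 hN3 hN4 f hf
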